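/- Let C, C' ⊆ ℝⁿ be the interiors of rational polyhedral cones such that W := closure(C) ∩ closure(C') is a common codimension-one face, and assume closure(C) is strongly convex. Then there is at most one integral automorphism γ of ℝⁿ with γ(C) = C' fixing W pointwise. -/

import Mathlib

/-!
Set `δ = γ₂⁻¹ ∘ γ₁`: an integral automorphism mapping `C` onto itself and fixing the
hyperplane `H = span W` pointwise. `H` misses `C`, because a face through an interior point spans
everything. Take `v ∈ C` and `f` with `ker f = H`, `f v = 1`; then `δ x = x + f x • u` with
`u = δ v - v`, so `det δ = f (δ v)`. This is positive, as `f` has constant sign on the connected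
set `C`, and it is `±1` by integrality; hence `f u = 0` and `δ u = u`. Now `δ^k v = v + k • u ∈ C`
for all `k ∈ ℤ`, so `u` and `-u` lie in the closed cone `closure C`, and strong convexity gives
`u = 0`, i.e. `δ = id`.
-/

open Set

def IsRatPolyCone {n : ℕ} (σ : Set (Fin n → ℝ)) : Prop :=
  ∃ (m : ℕ) (v : Fin m → (Fin n → ℚ)),
    σ = {x | ∃ c : Fin m → ℝ, (∀ i, 0 ≤ c i) ∧
      x = ∑ i, c i • (fun j => ((v i j : ℝ)))}

def IsFaceOf {n : ℕ} (F C : Set (Fin n → ℝ)) : Prop :=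
  F ⊆ C ∧ Convex ℝ F ∧ (∀ c : ℝ, 0 ≤ c → ∀ x ∈ F, c • x ∈ F) ∧
    ∀ x ∈ C, ∀ y ∈ C, x + y ∈ F → x ∈ F ∧ y ∈ F

def IsIntegralAut {n : ℕ} (γ : (Fin n → ℝ) ≃ₗ[ℝ] (Fin n → ℝ)) : Prop :=
  (∀ x : Fin n → ℤ, ∃ y : Fin n → ℤ, γ (fun i => ((x i : ℝ))) = fun i => ((y i : ℝ))) ∧
  (∀ x : Fin n → ℤ, ∃ y : Fin n → ℤ, γ.symm (fun i => ((x i : ℝ))) = fun i => ((y i : ℝ)))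

open Filter Topology Module LinearMap

section Recession

variable {V : Type*} [AddCommGroup V] [Module ℝ V] [TopologicalSpace V]
  [IsTopologicalAddGroup V] [ContinuousSMul ℝ V]

theorem PointedCone.mem_of_forall_add_natCast_smul_mem {K : PointedCone ℝ V}
    (hK : IsClosed (K : Set V)) {v u : V} (h : ∀ k : ℕ, v + (k : ℝ) • u ∈ K) : u ∈ K := by
  have hmem : ∀ k : ℕ, (1 / ((k : ℝ) + 1)) • v + ((k : ℝ) / (k + 1)) • u ∈ K := fun k => by
    have := K.smul_mem (r := 1 / ((k : ℝ) + 1)) (by positivity) (h k)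
    rwa [smul_add, smul_smul, one_div_mul_eq_div] at this
  have hlim : Tendsto (fun k : ℕ => (1 / ((k : ℝ) + 1)) • v + ((k : ℝ) / (k + 1)) • u)
      atTop (𝓝 ((0 : ℝ) • v + (1 : ℝ) • u)) :=
    (tendsto_one_div_add_atTop_nhds_zero_nat.smul_const v).add
      ((tendsto_natCast_div_add_atTop (1 : ℝ)).smul_const u)
  rw [zero_smul, one_smul, zero_add] at hlim
  exact hK.mem_of_tendsto hlim (Eventually.of_forall hmem)

theorem mem_of_mapsTo_of_apply_eq_add {K : PointedCone ℝ V} (hK : IsClosed (K : Set V))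
    {C : Set V} (hCK : C ⊆ K) {θ : V →ₗ[ℝ] V} (hθ : MapsTo θ C C) {v u : V} (hv : v ∈ C)
    (hθu : θ u = u) (hθv : θ v = v + u) : u ∈ K := by
  suffices h : ∀ k : ℕ, v + (k : ℝ) • u ∈ C from
    PointedCone.mem_of_forall_add_natCast_smul_mem hK fun k => hCK (h k)
  intro k
  induction k with
  | zero => simpa using hv
  | succ k ih =>
    convert hθ ih using 1
    rw [map_add, map_smul, hθu, hθv, Nat.cast_succ, add_smul, one_smul]
    abel

end Recession

section Hyperplane

variable {V : Type*} [AddCommGroup V] [Module ℝ V]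

theorem Submodule.exists_dual_ker_eq [FiniteDimensional ℝ V] {H : Submodule ℝ V}
    (hH : finrank ℝ H + 1 = finrank ℝ V) {v : V} (hv : v ∉ H) :
    ∃ f : Dual ℝ V, f v = 1 ∧ ker f = H := by
  obtain ⟨g, hgv, hHg⟩ := Submodule.exists_le_ker_of_notMem hv
  refine ⟨(g v)⁻¹ • g, inv_mul_cancel₀ hgv, ?_⟩
  rw [ker_smul _ _ (inv_ne_zero hgv)]
  refine (Submodule.eq_of_le_of_finrank_le hHg ?_).symm
  have := Dual.finrank_ker_add_one_of_ne_zero (f := g) (fun h => hgv (by simp [h]))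
  omega

theorem LinearMap.eq_transvection_of_forall_mem_ker {f : Dual ℝ V} {θ : V →ₗ[ℝ] V}
    (hθ : ∀ x ∈ ker f, θ x = x) {v : V} (hv : f v = 1) : θ = transvection f (θ v - v) := by
  ext x
  have hx : x - f x • v ∈ ker f := by simp [hv]
  have := hθ _ hx
  rw [map_sub, map_smul, sub_eq_iff_eq_add] at this
  rw [transvection.apply, smul_sub, this]
  abel

end Hyperplane

section Integral

variable {n : ℕ}

theorem IsIntegralAut.symm {γ : (Fin n → ℝ) ≃ₗ[ℝ] (Fin n → ℝ)} (hγ : IsIntegralAut γ) :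
    IsIntegralAut γ.symm :=
  ⟨hγ.2, hγ.1⟩

theorem IsIntegralAut.trans {γ γ' : (Fin n → ℝ) ≃ₗ[ℝ] (Fin n → ℝ)} (hγ : IsIntegralAut γ)
    (hγ' : IsIntegralAut γ') : IsIntegralAut (γ.trans γ') := by
  refine ⟨fun x => ?_, fun x => ?_⟩
  · obtain ⟨y, hy⟩ := hγ.1 x
    obtain ⟨z, hz⟩ := hγ'.1 y
    exact ⟨z, by simp [hy, hz]⟩
  · obtain ⟨y, hy⟩ := hγ'.2 x
    obtain ⟨z, hz⟩ := hγ.2 y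
    exact ⟨z, by simp [hy, hz]⟩

theorem exists_int_det_eq_of_integral {θ : (Fin n → ℝ) →ₗ[ℝ] (Fin n → ℝ)}
    (hθ : ∀ x : Fin n → ℤ, ∃ y : Fin n → ℤ, θ (fun i => (x i : ℝ)) = fun i => (y i : ℝ)) :
    ∃ m : ℤ, LinearMap.det θ = m := by
  choose A hA using fun j => hθ (Pi.single j 1)
  refine ⟨(Matrix.of fun i j => A j i).det, ?_⟩
  rw [← det_toMatrix', ← eq_intCast (Int.castRingHom ℝ), RingHom.map_det]
  congr 1
  ext i j
  rw [toMatrix'_apply, RingHom.mapMatrix_apply, Matrix.map_apply, Matrix.of_apply, eq_intCast,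
    ← congrFun (hA j) i]
  refine congrFun (congrArg θ (funext fun k => ?_)) i
  rcases eq_or_ne k j with rfl | hkj <;> simp [*]

theorem IsIntegralAut.det_eq_one_or_neg_one {γ : (Fin n → ℝ) ≃ₗ[ℝ] (Fin n → ℝ)}
    (hγ : IsIntegralAut γ) : LinearMap.det (γ : (Fin n → ℝ) →ₗ[ℝ] (Fin n → ℝ)) = 1 ∨
      LinearMap.det (γ : (Fin n → ℝ) →ₗ[ℝ] (Fin n → ℝ)) = -1 := by
  obtain ⟨a, ha⟩ := exists_int_det_eq_of_integral hγ.1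
  obtain ⟨b, hb⟩ := exists_int_det_eq_of_integral hγ.2
  have hab : a * b = 1 := by
    have := LinearMap.det_comp (γ : (Fin n → ℝ) →ₗ[ℝ] _) γ.symm
    rw [LinearEquiv.comp_coe, LinearEquiv.symm_trans_self, LinearEquiv.refl_toLinearMap,
      LinearMap.det_id, ha, hb] at this
    exact_mod_cast this.symm
  rcases Int.eq_one_or_neg_one_of_mul_eq_one hab with h | h <;> simp [ha, h]

end Integral

theorem IsRatPolyCone.exists_pointedCone_eq {n : ℕ} {σ : Set (Fin n → ℝ)}
    (hσ : IsRatPolyCone σ) : ∃ K : PointedCone ℝ (Fin n → ℝ), σ = K := by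
  obtain ⟨m, v, rfl⟩ := hσ
  refine ⟨PointedCone.hull ℝ (range fun i j => (v i j : ℝ)), ?_⟩
  ext x
  rw [SetLike.mem_coe, Submodule.mem_span_range_iff_exists_fun]
  constructor
  · rintro ⟨c, hc, rfl⟩
    exact ⟨fun i => ⟨c i, hc i⟩, rfl⟩
  · rintro ⟨c, rfl⟩
    exact ⟨fun i => c i, fun i => (c i).2, rfl⟩

section Face

variable {n : ℕ} {W S : Set (Fin n → ℝ)}

theorem IsFaceOf.add_mem (hW : IsFaceOf W S) {x y : Fin n → ℝ} (hx : x ∈ W) (hy : y ∈ W) :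
    x + y ∈ W := by
  have := hW.2.2.1 2 zero_le_two _ (hW.2.1 hx hy one_half_pos.le one_half_pos.le (add_halves 1))
  rwa [smul_add, smul_smul, smul_smul, mul_one_div_cancel two_ne_zero, one_smul, one_smul]
    at this

theorem IsFaceOf.exists_sub_of_mem_span (hW : IsFaceOf W S) (h0 : 0 ∈ W) {x : Fin n → ℝ}
    (hx : x ∈ Submodule.span ℝ W) : ∃ a ∈ W, ∃ b ∈ W, x = a - b := by
  induction hx using Submodule.span_induction with
  | mem w hw => exact ⟨w, hw, 0, h0, (sub_zero w).symm⟩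
  | zero => exact ⟨0, h0, 0, h0, (sub_zero 0).symm⟩
  | add x y _ _ hx hy =>
    obtain ⟨a, ha, b, hb, rfl⟩ := hx
    obtain ⟨a', ha', b', hb', rfl⟩ := hy
    exact ⟨a + a', hW.add_mem ha ha', b + b', hW.add_mem hb hb', by abel⟩
  | smul r x _ hx =>
    obtain ⟨a, ha, b, hb, rfl⟩ := hx
    rcases le_total 0 r with hr | hr
    · exact ⟨r • a, hW.2.2.1 r hr a ha, r • b, hW.2.2.1 r hr b hb, smul_sub r a b⟩
    · refine ⟨(-r) • b, hW.2.2.1 _ (neg_nonneg.2 hr) b hb, (-r) • a,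
        hW.2.2.1 _ (neg_nonneg.2 hr) a ha, ?_⟩
      rw [smul_sub, neg_smul, neg_smul]
      abel

theorem IsFaceOf.mem_of_mem_span (hW : IsFaceOf W S) (h0 : 0 ∈ W) {x : Fin n → ℝ} (hxS : x ∈ S)
    (hx : x ∈ Submodule.span ℝ W) : x ∈ W := by
  obtain ⟨a, ha, b, hb, rfl⟩ := hW.exists_sub_of_mem_span h0 hx
  exact (hW.2.2.2 _ hxS b (hW.1 hb) (by rwa [sub_add_cancel])).1

/-- Near an interior point `x` of `S`, both `z` and `2 • x - z` lie in `S`; their sum `2 • x`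
is in the face, hence so is `z`. -/
theorem IsFaceOf.span_eq_top_of_mem_interior (hW : IsFaceOf W S) {x : Fin n → ℝ} (hxW : x ∈ W)
    (hxS : x ∈ interior S) : Submodule.span ℝ W = ⊤ := by
  refine Submodule.eq_top_of_nonempty_interior' _ ⟨x, ?_⟩
  set U := interior S ∩ (fun z => (2 : ℝ) • x - z) ⁻¹' interior S
  have hU : IsOpen U :=
    isOpen_interior.inter (isOpen_interior.preimage (continuous_const.sub continuous_id))
  have hxU : x ∈ U := ⟨hxS, by simpa [two_smul] using hxS⟩
  have hUW : U ⊆ W := fun z ⟨hz, hz'⟩ =>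
    (hW.2.2.2 z (interior_subset hz) _ (interior_subset hz')
      (by simpa using hW.2.2.1 2 zero_le_two x hxW)).1
  exact interior_maximal (hUW.trans Submodule.subset_span) hU hxU

theorem IsFaceOf.notMem_span_of_mem_interior (hW : IsFaceOf W S) (h0 : 0 ∈ W)
    (hspan : Submodule.span ℝ W ≠ ⊤) {x : Fin n → ℝ} (hx : x ∈ interior S) :
    x ∉ Submodule.span ℝ W := fun hxW =>
  hspan (hW.span_eq_top_of_mem_interior (hW.mem_of_mem_span h0 (interior_subset hx) hxW) hx)

end Face

theorem IsPreconnected.pos_of_forall_ne_zero {X : Type*} [TopologicalSpace X] {s : Set X}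
    (hs : IsPreconnected s) {g : X → ℝ} (hg : ContinuousOn g s) (hne : ∀ x ∈ s, g x ≠ 0)
    {a : X} (ha : a ∈ s) (hpos : 0 < g a) {x : X} (hx : x ∈ s) : 0 < g x := by
  by_contra! h
  obtain ⟨y, hy, hy0⟩ := hs.intermediate_value hx ha hg ⟨h, hpos.le⟩
  exact hne y hy hy0

theorem IsIntegralAut.eq_refl_of_forall_mem_ker {n : ℕ} {δ : (Fin n → ℝ) ≃ₗ[ℝ] (Fin n → ℝ)}
    (hδ : IsIntegralAut δ) {K : PointedCone ℝ (Fin n → ℝ)} (hK : IsClosed (K : Set (Fin n → ℝ)))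
    (hKsalient : ∀ x ∈ K, -x ∈ K → x = 0) {C : Set (Fin n → ℝ)} (hC : IsPreconnected C)
    (hCK : C ⊆ K) (hδC : δ '' C = C) {f : Dual ℝ (Fin n → ℝ)} {v : Fin n → ℝ} (hv : v ∈ C)
    (hfv : f v = 1) (hCf : ∀ x ∈ C, f x ≠ 0) (hfix : ∀ x ∈ ker f, δ x = x) :
    δ = LinearEquiv.refl ℝ (Fin n → ℝ) := by
  have hmaps : MapsTo δ C C := fun x hx => hδC ▸ mem_image_of_mem δ hx
  have hmaps_symm : MapsTo δ.symm C C := fun x hx => by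
    obtain ⟨y, hy, rfl⟩ := hδC.symm ▸ hx
    simpa using hy
  set u := δ v - v with hu_def
  have hδ_eq : (δ : (Fin n → ℝ) →ₗ[ℝ] (Fin n → ℝ)) = transvection f u :=
    eq_transvection_of_forall_mem_ker hfix hfv
  have hpos : 0 < f (δ v) :=
    hC.pos_of_forall_ne_zero (continuous_of_finiteDimensional f).continuousOn hCf hv
      (hfv ▸ one_pos) (hmaps hv)
  have hfu : f u = 0 := by
    have hdet : LinearMap.det (δ : (Fin n → ℝ) →ₗ[ℝ] (Fin n → ℝ)) = 1 + f u := by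
      rw [hδ_eq, transvection.det]
    rw [hu_def, map_sub, hfv] at hdet ⊢
    rcases hδ.det_eq_one_or_neg_one with h | h <;> rw [h] at hdet <;> linarith
  have hδu : δ u = u := hfix u hfu
  have huK : u ∈ K :=
    mem_of_mapsTo_of_apply_eq_add hK hCK hmaps hv hδu (by rw [hu_def]; abel)
  have hneguK : -u ∈ K := by
    refine mem_of_mapsTo_of_apply_eq_add (θ := (δ.symm : (Fin n → ℝ) →ₗ[ℝ] (Fin n → ℝ)))
      hK hCK hmaps_symm hv ?_ ?_
    · simpa using δ.symm_apply_eq.mpr hδu.symm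
    · exact δ.symm_apply_eq.mpr (by rw [map_add, map_neg, hδu, hu_def]; abel)
  have hu0 : u = 0 := hKsalient u huK hneguK
  ext1 x
  simpa [hu0] using LinearMap.congr_fun hδ_eq x

theorem stmt2_general {n : ℕ} (σ : Set (Fin n → ℝ))
    (hσ : IsRatPolyCone σ)
    (C C' : Set (Fin n → ℝ)) (hC : C = interior σ)
    (hCne : C.Nonempty)
    (W : Set (Fin n → ℝ)) (hW : W = closure C ∩ closure C')
    (hWfaceC : IsFaceOf W (closure C))
    (hWcodim : Module.finrank ℝ (Submodule.span ℝ W) + 1 = n)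
    -- `closure C` is strongly convex: it contains no nonzero linear subspace
    (hstrconv : ∀ x ∈ closure C, -x ∈ closure C → x = 0)
    (γ₁ γ₂ : (Fin n → ℝ) ≃ₗ[ℝ] (Fin n → ℝ))
    (hγ₁int : IsIntegralAut γ₁) (hγ₂int : IsIntegralAut γ₂)
    (hγ₁C : γ₁ '' C = C') (hγ₂C : γ₂ '' C = C')
    (hγ₁W : ∀ w ∈ W, γ₁ w = w) (hγ₂W : ∀ w ∈ W, γ₂ w = w) :
    γ₁ = γ₂ := by
  obtain ⟨v, hv⟩ := hCne
  obtain ⟨K, rfl⟩ := hσ.exists_pointedCone_eq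
  have hCK : closure C = K.closure := by
    rw [hC, PointedCone.coe_closure,
      K.convex.closure_interior_eq_closure_of_nonempty_interior (hC ▸ ⟨v, hv⟩)]
  have h0W : (0 : Fin n → ℝ) ∈ W := by
    have h0 : (0 : Fin n → ℝ) ∈ closure C := hCK ▸ K.closure.zero_mem
    refine hW ▸ ⟨h0, ?_⟩
    rw [← hγ₁C, ← map_zero γ₁]
    exact map_mem_closure γ₁.toContinuousLinearEquiv.continuous h0 (mapsTo_image _ _)
  have hspan : Submodule.span ℝ W ≠ ⊤ := fun htop => by
    rw [htop, finrank_top, finrank_fin_fun] at hWcodim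
    omega
  have hCspan : ∀ x ∈ C, x ∉ Submodule.span ℝ W := fun x hx =>
    hWfaceC.notMem_span_of_mem_interior h0W hspan
      (interior_maximal subset_closure (hC ▸ isOpen_interior) hx)
  obtain ⟨f, hfv, hker⟩ := Submodule.exists_dual_ker_eq (by rwa [finrank_fin_fun]) (hCspan v hv)
  have hδC : (γ₁.trans γ₂.symm) '' C = C := by
    change (fun x => γ₂.symm (γ₁ x)) '' C = C
    rw [← image_image, hγ₁C, ← hγ₂C, image_image]
    simp
  have hδfix : ∀ x ∈ ker f, γ₁.trans γ₂.symm x = x := fun x hx =>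
    γ₂.symm_apply_eq.mpr <| LinearMap.eqOn_span (f := γ₁.toLinearMap) (g := γ₂.toLinearMap)
      (fun w hw => (hγ₁W w hw).trans (hγ₂W w hw).symm) (hker ▸ hx)
  have hδ := (hγ₁int.trans hγ₂int.symm).eq_refl_of_forall_mem_ker isClosed_closure
    (hCK ▸ hstrconv) (hC ▸ K.convex.interior).isPreconnected (hCK ▸ subset_closure) hδC hv hfv
    (fun x hx hfx => hCspan x hx (hker ▸ hfx)) hδfix
  exact LinearEquiv.ext fun x => γ₂.symm_apply_eq.mp (DFunLike.congr_fun hδ x)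

theorem stmt2 {n : ℕ} (σ σ' : Set (Fin n → ℝ))
    (hσ : IsRatPolyCone σ) (hσ' : IsRatPolyCone σ')
    (C C' : Set (Fin n → ℝ)) (hC : C = interior σ) (hC' : C' = interior σ')
    (hCne : C.Nonempty) (hC'ne : C'.Nonempty)
    (W : Set (Fin n → ℝ)) (hW : W = closure C ∩ closure C')
    (hWfaceC : IsFaceOf W (closure C)) (hWfaceC' : IsFaceOf W (closure C'))
    (hWcodim : Module.finrank ℝ (Submodule.span ℝ W) + 1 = n)
    -- `closure C` is strongly convex: it contains no nonzero linear subspace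
    (hstrconv : ∀ x ∈ closure C, -x ∈ closure C → x = 0)
    (γ₁ γ₂ : (Fin n → ℝ) ≃ₗ[ℝ] (Fin n → ℝ))
    (hγ₁int : IsIntegralAut γ₁) (hγ₂int : IsIntegralAut γ₂)
    (hγ₁C : γ₁ '' C = C') (hγ₂C : γ₂ '' C = C')
    (hγ₁W : ∀ w ∈ W, γ₁ w = w) (hγ₂W : ∀ w ∈ W, γ₂ w = w) :
    γ₁ = γ₂ :=
  stmt2_general σ hσ C C' hC hCne W hW hWfaceC hWcodim hstrconv γ₁ γ₂ hγ₁int hγ₂int hγ₁C hγ₂C hγ₁W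
    hγ₂W
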